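/- arXiv:2004.05903 — 3 statements merged into one kernel-verified Lean document; each statement's English description precedes it below -/
import Mathlib

section
/- Let g be an invertible linear endomorphism of a finite-dimensional real vector space V with nondegenerate symmetric bilinear form o, and σ(g) := (g*)^{-1}. If there exist o-orthogonal bases of lines 𝒞 and 𝒞' of V with g·𝒞 = 𝒞' (as sets of lines, mapping each line to a line), then σ(g⁻¹)g is diagonalizable with real eigenvalues. -/
/-!
The invariance of the lines under `σ(g⁻¹) g` is the key point. For `x ∈ ℓ i` and every line
`ℓ' j` with `j ≠ σ i` we have `o(ℓ' j, gsi x) = o(g⁻¹ ℓ' j, x) = 0`, because `g⁻¹ ℓ' j` is one of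
the lines `ℓ k` with `k ≠ i`. As the lines `ℓ'` are orthogonal, span `V` and `o` is
nondegenerate, this forces `gsi x ∈ ℓ' (σ i) = g (ℓ i)`. Comparing dimensions,
`gsi (ℓ i) = g (ℓ i)`, so `gsi⁻¹ g` preserves every line `ℓ i`, and a basis of vectors taken
from these lines diagonalizes it.
-/

open Module Submodule

namespace LinearMap.SeparatingRight

variable {R M ι : Type*} [CommRing R] [AddCommGroup M] [Module R M]
  {B : LinearMap.BilinForm R M} {p : ι → Submodule R M}

theorem eq_zero_of_iSup_eq_top (hB : B.SeparatingRight) (hp : ⨆ i, p i = ⊤) {z : M}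
    (hz : ∀ i, ∀ y ∈ p i, B y z = 0) : z = 0 :=
  hB z fun y => iSup_induction p (motive := fun y => B y z = 0) (hp ▸ mem_top) hz
    (by simp) fun y₁ y₂ h₁ h₂ => by simp [h₁, h₂]

theorem mem_of_forall_ne_of_iSup_eq_top (hB : B.SeparatingRight) (hp : ⨆ i, p i = ⊤)
    (horth : ∀ i j, i ≠ j → ∀ v ∈ p i, ∀ w ∈ p j, B v w = 0) {k : ι} {x : M}
    (hx : ∀ j, j ≠ k → ∀ y ∈ p j, B y x = 0) : x ∈ p k := by
  obtain ⟨f, hf, rfl⟩ := (mem_iSup_iff_exists_finsupp p x).mp (hp ▸ mem_top)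
  have hsum : ∀ j, ∀ y ∈ p j, B y (f.sum fun _ v => v) = B y (f j) := by
    intro j y hy
    rw [map_finsuppSum, Finsupp.sum_eq_single j (fun m _ hm => horth j m hm.symm y hy _ (hf m))
      fun _ => map_zero _]
  have hzero : ∀ j, j ≠ k → f j = 0 := fun j hj =>
    hB.eq_zero_of_iSup_eq_top hp fun i y hy => by
      rcases eq_or_ne i j with rfl | hij
      · rw [← hsum i y hy]
        exact hx i hj y hy
      · exact horth i j hij y hy _ (hf j)
  rw [Finsupp.sum_eq_single k (fun j _ hj => hzero j hj) fun _ => rfl]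
  exact hf k

theorem map_le_of_map_eq_of_adjoint {κ : Type*} (hB : B.SeparatingRight) {q : κ → Submodule R M}
    (hp : ∀ i j, i ≠ j → ∀ v ∈ p i, ∀ w ∈ p j, B v w = 0)
    (hq : ∀ i j, i ≠ j → ∀ v ∈ q i, ∀ w ∈ q j, B v w = 0) (hq_top : ⨆ j, q j = ⊤)
    {g g' : M ≃ₗ[R] M} (hadj : ∀ u v, B (g.symm u) v = B u (g' v)) {σ : ι ≃ κ}
    (hmap : ∀ i, (p i).map g.toLinearMap = q (σ i)) (i : ι) :
    (p i).map g'.toLinearMap ≤ q (σ i) := by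
  rintro _ ⟨x, hx, rfl⟩
  refine hB.mem_of_forall_ne_of_iSup_eq_top hq_top hq fun j hj y hy => ?_
  have hgy : g.symm y ∈ p (σ.symm j) := by
    rw [← mem_map_equiv, hmap, σ.apply_symm_apply]
    exact hy
  rw [LinearEquiv.coe_coe, ← hadj]
  exact hp _ i (fun h => hj (σ.symm_apply_eq.mp h)) _ hgy x hx

end LinearMap.SeparatingRight

section FiniteDimensional

variable {K V ι : Type*} [Field K] [AddCommGroup V] [Module K V]

theorem Submodule.symm_apply_apply_mem_of_map_le [FiniteDimensional K V] {e f : V ≃ₗ[K] V}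
    {p : Submodule K V} (h : p.map f.toLinearMap ≤ p.map e.toLinearMap) {x : V} (hx : x ∈ p) :
    f.symm (e x) ∈ p := by
  have heq : p.map f.toLinearMap = p.map e.toLinearMap :=
    eq_of_le_of_finrank_eq h (by rw [LinearEquiv.finrank_map_eq, LinearEquiv.finrank_map_eq])
  rw [← mem_map_equiv, heq]
  exact mem_map_of_mem hx

theorem exists_basis_mem_of_finrank_eq_one [Fintype ι] {p : ι → Submodule K V}
    (hp : ∀ i, finrank K (p i) = 1) (hp_top : ⨆ i, p i = ⊤)
    (hcard : Fintype.card ι = finrank K V) : ∃ b : Basis ι K V, ∀ i, b i ∈ p i := by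
  have hne : ∀ i, ∃ v ∈ p i, v ≠ 0 := fun i =>
    exists_mem_ne_zero_of_ne_bot fun h => by
      have := hp i
      rw [h, finrank_bot] at this
      exact zero_ne_one this
  choose v hvp hv0 using hne
  have hspan : ⊤ ≤ span K (Set.range v) := by
    rw [← hp_top, span_range_eq_iSup]
    exact iSup_mono fun i => (eq_span_singleton_of_mem_of_finrank_eq_one (hp i) (hvp i) (hv0 i)).le
  exact ⟨basisOfTopLeSpanOfCardEqFinrank v hspan hcard, fun i => by simpa using hvp i⟩

end FiniteDimensional

theorem stmt_7_general (d : ℕ) (V : Type*) [AddCommGroup V] [Module ℝ V] [FiniteDimensional ℝ V]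
    (hd : Module.finrank ℝ V = d)
    (B : LinearMap.BilinForm ℝ V)
    (hnd : LinearMap.BilinForm.Nondegenerate B)
    (g gsi : V ≃ₗ[ℝ] V) (hadj : ∀ u v : V, B (g.symm u) v = B u (gsi v))
    (ℓ ℓ' : Fin d → Submodule ℝ V)
    (hrank : ∀ i, Module.finrank ℝ (ℓ i) = 1)
    (horth : ∀ i j, i ≠ j → ∀ v ∈ ℓ i, ∀ w ∈ ℓ j, B v w = 0)
    (horth' : ∀ i j, i ≠ j → ∀ v ∈ ℓ' i, ∀ w ∈ ℓ' j, B v w = 0)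
    (hspan : (⨆ i, ℓ i) = ⊤) (hspan' : (⨆ i, ℓ' i) = ⊤)
    (hmap : ∃ σp : Equiv.Perm (Fin d), ∀ i, Submodule.map g.toLinearMap (ℓ i) = ℓ' (σp i)) :
    ∃ b : Module.Basis (Fin d) ℝ V, ∀ i, ∃ μ : ℝ,
      (gsi.symm.toLinearMap ∘ₗ g.toLinearMap) (b i) = μ • b i := by
  obtain ⟨σ, hσ⟩ := hmap
  have hinv : ∀ i, ∀ x ∈ ℓ i, gsi.symm (g x) ∈ ℓ i := fun i _ hx =>
    symm_apply_apply_mem_of_map_le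
      ((hnd.2.map_le_of_map_eq_of_adjoint horth horth' hspan' hadj hσ i).trans (hσ i).ge) hx
  obtain ⟨b, hb⟩ := exists_basis_mem_of_finrank_eq_one hrank hspan (by simp [hd])
  refine ⟨b, fun i => ?_⟩
  have hline := eq_span_singleton_of_mem_of_finrank_eq_one (hrank i) (hb i) (b.ne_zero i)
  obtain ⟨μ, hμ⟩ := mem_span_singleton.mp (hline ▸ hinv i _ (hb i))
  exact ⟨μ, hμ.symm⟩

/-- if `g` maps an `o`-orthogonal basis of lines `𝒞` onto an `o`-orthogonal basis
of lines `𝒞'`, then `σ(g⁻¹)g` is diagonalizable with real eigenvalues. Here `gsi` is the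
`o`-adjoint of `g⁻¹`, so that `σ(g⁻¹) = gsi⁻¹`. -/
theorem stmt_7 (d : ℕ) (V : Type*) [AddCommGroup V] [Module ℝ V] [FiniteDimensional ℝ V]
    (hd : Module.finrank ℝ V = d)
    (B : LinearMap.BilinForm ℝ V) (hsymm : LinearMap.BilinForm.IsSymm B)
    (hnd : LinearMap.BilinForm.Nondegenerate B)
    (g gsi : V ≃ₗ[ℝ] V) (hadj : ∀ u v : V, B (g.symm u) v = B u (gsi v))
    (ℓ ℓ' : Fin d → Submodule ℝ V)
    (hrank : ∀ i, Module.finrank ℝ (ℓ i) = 1)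
    (hrank' : ∀ i, Module.finrank ℝ (ℓ' i) = 1)
    (horth : ∀ i j, i ≠ j → ∀ v ∈ ℓ i, ∀ w ∈ ℓ j, B v w = 0)
    (horth' : ∀ i j, i ≠ j → ∀ v ∈ ℓ' i, ∀ w ∈ ℓ' j, B v w = 0)
    (hspan : (⨆ i, ℓ i) = ⊤) (hspan' : (⨆ i, ℓ' i) = ⊤)
    (hmap : ∃ σp : Equiv.Perm (Fin d), ∀ i, Submodule.map g.toLinearMap (ℓ i) = ℓ' (σp i)) :
    ∃ b : Module.Basis (Fin d) ℝ V, ∀ i, ∃ μ : ℝ,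
      (gsi.symm.toLinearMap ∘ₗ g.toLinearMap) (b i) = μ • b i :=
  stmt_7_general d V hd B hnd g gsi hadj ℓ ℓ' hrank horth horth' hspan hspan' hmap
end

section
/- Let o be a nondegenerate symmetric bilinear form of signature (p, q) on ℝ^d (p + q = d, p, q > 0) and let ξ, ξ' be two complete flags such that the restriction of o to ξ^j and to ξ'^j is nondegenerate for every j. Then there exists a linear isometry h of o with h·ξ = ξ' if and only if for every j = 1, …, d the signature of o restricted to ξ^j equals the signature of o restricted to ξ'^j. -/
/-- A complete flag of a `d`-dimensional space. -/
def IsCompleteFlag (d : ℕ) {V : Type*} [AddCommGroup V] [Module ℝ V]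
    (ξ : ℕ → Submodule ℝ V) : Prop :=
  (∀ j ≤ d, Module.finrank ℝ (ξ j) = j) ∧ ∀ j < d, ξ j ≤ ξ (j + 1)

/-- The positive index of `o` restricted to `W`: the maximal dimension of a subspace of `W`
on which `o` is positive definite. -/
noncomputable def posIndex {V : Type*} [AddCommGroup V] [Module ℝ V]
    (B : LinearMap.BilinForm ℝ V) (W : Submodule ℝ V) : ℕ :=
  sSup {n | ∃ U : Submodule ℝ V, U ≤ W ∧ Module.finrank ℝ U = n ∧
    ∀ v ∈ U, v ≠ 0 → 0 < B v v}

/-- The negative index of `o` restricted to `W`. -/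
noncomputable def negIndex {V : Type*} [AddCommGroup V] [Module ℝ V]
    (B : LinearMap.BilinForm ℝ V) (W : Submodule ℝ V) : ℕ :=
  sSup {n | ∃ U : Submodule ℝ V, U ≤ W ∧ Module.finrank ℝ U = n ∧
    ∀ v ∈ U, v ≠ 0 → B v v < 0}

/-!
Gram–Schmidt along a flag whose pieces are all nondegenerate produces vectors `v₀, …, v_{d-1}`,
pairwise `B`-orthogonal with `B vᵢ vᵢ = ±1`, such that `ξ j` is spanned by the first `j` of them.
By Sylvester's law of inertia the positive index of `ξ j` is the number of `i < j` with
`B vᵢ vᵢ = 1`, so equal signatures along two flags force equal signs `B vᵢ vᵢ = B v'ᵢ v'ᵢ`,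
and the linear map `vᵢ ↦ v'ᵢ` is then an isometry carrying one flag to the other.
Conversely, isometries preserve positive and negative indices.
-/

open Module Submodule Finset
open LinearMap (BilinForm)

section Index

variable {V : Type*} [AddCommGroup V] [Module ℝ V]

lemma negIndex_eq_posIndex_neg (B : BilinForm ℝ V) (W : Submodule ℝ V) :
    negIndex B W = posIndex (-B) W := by
  simp only [negIndex, posIndex, LinearMap.neg_apply, neg_pos]

lemma pos_of_mem_map_of_isometry {V' : Type*} [AddCommGroup V'] [Module ℝ V']
    {B : BilinForm ℝ V} {B' : BilinForm ℝ V'} (e : V ≃ₗ[ℝ] V') (he : ∀ u w, B' (e u) (e w) = B u w)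
    {U : Submodule ℝ V} (hU : ∀ v ∈ U, v ≠ 0 → 0 < B v v) :
    ∀ v ∈ U.map e.toLinearMap, v ≠ 0 → 0 < B' v v := by
  rintro _ ⟨u, hu, rfl⟩ hu0
  rw [LinearEquiv.coe_coe, he]
  exact hU u hu (by simpa using hu0)

lemma posIndex_map_of_isometry {V' : Type*} [AddCommGroup V'] [Module ℝ V']
    {B : BilinForm ℝ V} {B' : BilinForm ℝ V'} (e : V ≃ₗ[ℝ] V') (he : ∀ u w, B' (e u) (e w) = B u w)
    (W : Submodule ℝ V) : posIndex B' (W.map e.toLinearMap) = posIndex B W := by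
  have he' : ∀ u w, B (e.symm u) (e.symm w) = B' u w := fun u w => by
    rw [← he, e.apply_symm_apply, e.apply_symm_apply]
  unfold posIndex
  congr 1
  ext n
  constructor
  · rintro ⟨U, hUW, rfl, hU⟩
    refine ⟨U.map e.symm.toLinearMap, ?_, e.symm.finrank_map_eq U,
      pos_of_mem_map_of_isometry e.symm he' hU⟩
    rw [← (Submodule.map_symm_eq_iff e (p := W)).mpr rfl]
    exact Submodule.map_mono hUW
  · rintro ⟨U, hUW, rfl, hU⟩
    exact ⟨U.map e.toLinearMap, Submodule.map_mono hUW, e.finrank_map_eq U,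
      pos_of_mem_map_of_isometry e he hU⟩

end Index

section Diagonal

variable {V ι : Type*} [AddCommGroup V] [Module ℝ V] {B : BilinForm ℝ V} {v : ι → V}

lemma apply_sum_smul_of_iIsOrtho (horth : B.iIsOrtho v) (s : Finset ι) (c : ι → ℝ) :
    B (∑ i ∈ s, c i • v i) (∑ i ∈ s, c i • v i) = ∑ i ∈ s, c i ^ 2 * B (v i) (v i) := by
  simp only [map_sum, map_smul, LinearMap.sum_apply, LinearMap.smul_apply, smul_eq_mul]
  refine Finset.sum_congr rfl fun i hi => ?_
  rw [Finset.sum_eq_single i (fun j _ hji => by rw [BilinForm.iIsOrtho_def.1 horth j i hji,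
    mul_zero]) (fun h => absurd hi h)]
  ring

lemma pos_of_mem_span_image (horth : B.iIsOrtho v) {s : Finset ι}
    (hs : ∀ i ∈ s, 0 < B (v i) (v i)) : ∀ u ∈ span ℝ (v '' s), u ≠ 0 → 0 < B u u := by
  intro u hu hu0
  obtain ⟨c, rfl⟩ := (mem_span_image_finset_iff_exists_fun' ℝ).1 hu
  obtain ⟨i, hi, hci⟩ : ∃ i ∈ s, c i ≠ 0 := by
    by_contra! h
    exact hu0 (Finset.sum_eq_zero fun i hi => by rw [h i hi, zero_smul])
  rw [apply_sum_smul_of_iIsOrtho horth]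
  exact Finset.sum_pos' (fun j hj => mul_nonneg (sq_nonneg _) (hs j hj).le)
    ⟨i, hi, mul_pos (by positivity) (hs i hi)⟩

lemma LinearIndependent.finrank_span_image_finset (hli : LinearIndependent ℝ v) (s : Finset ι) :
    finrank ℝ (span ℝ (v '' s)) = #s := by
  rw [Set.image_eq_range]
  exact (finrank_span_eq_card (hli.comp _ Subtype.val_injective)).trans (by simp)

lemma posIndex_span_image [FiniteDimensional ℝ V] (horth : B.iIsOrtho v)
    (hne : ∀ i, B (v i) (v i) ≠ 0) (s : Finset ι) :
    posIndex B (span ℝ (v '' s)) = #{i ∈ s | 0 < B (v i) (v i)} := by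
  classical
  have hli := BilinForm.linearIndependent_of_iIsOrtho horth hne
  set P := {i ∈ s | 0 < B (v i) (v i)}
  set N := {i ∈ s | ¬ 0 < B (v i) (v i)}
  have hPs : span ℝ (v '' P) ≤ span ℝ (v '' s) :=
    span_mono (Set.image_mono (coe_subset.2 (filter_subset _ s)))
  have hNs : span ℝ (v '' N) ≤ span ℝ (v '' s) :=
    span_mono (Set.image_mono (coe_subset.2 (filter_subset _ s)))
  have hN : ∀ u ∈ span ℝ (v '' N), u ≠ 0 → 0 < (-B) u u := by
    refine pos_of_mem_span_image
      (BilinForm.iIsOrtho_def.2 fun i j hij => by simp [BilinForm.iIsOrtho_def.1 horth i j hij])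
      fun i hi => ?_
    simp only [LinearMap.neg_apply, neg_pos]
    exact lt_of_le_of_ne (not_lt.1 (mem_filter.1 hi).2) (hne i)
  refine IsGreatest.csSup_eq ⟨⟨span ℝ (v '' P), hPs, hli.finrank_span_image_finset P,
    pos_of_mem_span_image horth fun i hi => (mem_filter.1 hi).2⟩, ?_⟩
  rintro _ ⟨U, hUs, rfl, hU⟩
  have hdisj : U ⊓ span ℝ (v '' N) = ⊥ := by
    refine (Submodule.disjoint_def.2 fun u hU' hN' => ?_).eq_bot
    by_contra hu0
    have hneg := hN u hN' hu0
    rw [LinearMap.neg_apply, LinearMap.neg_apply, neg_pos] at hneg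
    exact (hU u hU' hu0).not_gt hneg
  have hdim := Submodule.finrank_sup_add_finrank_inf_eq U (span ℝ (v '' N))
  have hle := Submodule.finrank_mono (sup_le hUs hNs)
  rw [hdisj, finrank_bot, hli.finrank_span_image_finset] at hdim
  rw [hli.finrank_span_image_finset] at hle
  have hcard : #P + #N = #s := card_filter_add_card_filter_not _
  omega

end Diagonal

lemma Module.Basis.isometry_equiv_of_gram_eq {R M ι : Type*} [CommSemiring R] [AddCommMonoid M]
    [Module R M] {B : BilinForm R M} (b b' : Basis ι R M)
    (hgram : ∀ i j, B (b i) (b j) = B (b' i) (b' j)) (u w : M) :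
    B (b.equiv b' (Equiv.refl ι) u) (b.equiv b' (Equiv.refl ι) w) = B u w := by
  have hcompl : B.compl₁₂ (b.equiv b' (Equiv.refl ι)).toLinearMap
      (b.equiv b' (Equiv.refl ι)).toLinearMap = B :=
    LinearMap.ext_basis b b fun i j => by simpa using (hgram i j).symm
  exact LinearMap.congr_fun₂ hcompl u w

lemma Fin.card_filter_val_lt_succ {d : ℕ} (p : Fin d → Prop) [DecidablePred p] (i : Fin d) :
    #{k ∈ {k : Fin d | (k : ℕ) < i + 1} | p k} =
      #{k ∈ {k : Fin d | (k : ℕ) < i} | p k} + if p i then 1 else 0 := by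
  have hinsert : ({k : Fin d | (k : ℕ) < i + 1} : Finset (Fin d)) =
      insert i ({k : Fin d | (k : ℕ) < i} : Finset (Fin d)) := by
    ext k
    simp only [mem_filter, mem_univ, true_and, mem_insert, Fin.ext_iff]
    omega
  rw [hinsert, filter_insert]
  split_ifs <;> simp [card_insert_of_notMem]

lemma Fin.iff_of_card_filter_val_lt_eq {d : ℕ} {p q : Fin d → Prop} [DecidablePred p]
    [DecidablePred q]
    (h : ∀ j ≤ d, #{k ∈ {k : Fin d | (k : ℕ) < j} | p k} = #{k ∈ {k : Fin d | (k : ℕ) < j} | q k})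
    (i : Fin d) : p i ↔ q i := by
  have := h (i + 1) i.2
  rw [Fin.card_filter_val_lt_succ, Fin.card_filter_val_lt_succ, h i i.2.le] at this
  by_cases hp : p i <;> by_cases hq : q i <;> simp [hp, hq] at this ⊢

section Flag

variable {V : Type*} [AddCommGroup V] [Module ℝ V] {B : BilinForm ℝ V}

namespace IsCompleteFlag

variable {d : ℕ} {ξ : ℕ → Submodule ℝ V}

lemma mono (hξ : IsCompleteFlag d ξ) {i j : ℕ} (hij : i ≤ j) (hjd : j ≤ d) : ξ i ≤ ξ j := by
  induction j, hij using Nat.le_induction with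
  | base => exact le_rfl
  | succ k _ ih => exact (ih (by omega)).trans (hξ.2 k (by omega))

lemma zero_eq_bot [FiniteDimensional ℝ V] (hξ : IsCompleteFlag d ξ) : ξ 0 = ⊥ :=
  Submodule.finrank_eq_zero.1 (hξ.1 0 d.zero_le)

end IsCompleteFlag

lemma exists_smul_apply_self_eq_one_or {b : V} (hb : B b b ≠ 0) :
    ∃ c : ℝ, c ≠ 0 ∧ (B (c • b) (c • b) = 1 ∨ B (c • b) (c • b) = -1) := by
  have habs : 0 < |B b b| := abs_pos.2 hb
  refine ⟨(√|B b b|)⁻¹, by positivity, ?_⟩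
  have hval : B ((√|B b b|)⁻¹ • b) ((√|B b b|)⁻¹ • b) = B b b / |B b b| := by
    simp only [map_smul, LinearMap.smul_apply, smul_eq_mul, ← mul_assoc, ← mul_inv,
      Real.mul_self_sqrt habs.le]
    ring
  rcases hb.lt_or_gt with h | h
  · right; rw [hval, abs_of_neg h]; field_simp
  · left; rw [hval, abs_of_pos h]; field_simp

lemma exists_orthogonal_step [FiniteDimensional ℝ V] (hB : B.IsRefl) {W W' : Submodule ℝ V}
    (hWW' : W ≤ W') (hrank : finrank ℝ W' = finrank ℝ W + 1)
    (hW : (B.restrict W).Nondegenerate) (hW' : (B.restrict W').Nondegenerate) :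
    ∃ w ∈ B.orthogonal W, (B w w = 1 ∨ B w w = -1) ∧ W' = W ⊔ span ℝ {w} := by
  have hc := BilinForm.isCompl_orthogonal_of_restrict_nondegenerate hB hW
  set K := B.orthogonal W ⊓ W'
  have hW'K : W' = W ⊔ K := by
    rw [← sup_inf_assoc_of_le _ hWW', hc.sup_eq_top, top_inf_eq]
  have hK : finrank ℝ K = 1 := by
    have := Submodule.finrank_sup_add_finrank_inf_eq W K
    rw [← hW'K, (hc.disjoint.mono_right inf_le_left).eq_bot, finrank_bot] at this
    omega
  obtain ⟨b, hbK, hb0⟩ := Submodule.exists_mem_ne_zero_of_ne_bot (p := K) fun h => by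
    rw [h, finrank_bot] at hK
    exact zero_ne_one hK
  have hKb : K = span ℝ {b} := (eq_of_le_of_finrank_le ((span_singleton_le_iff_mem _ _).2 hbK)
    (by rw [hK, finrank_span_singleton hb0])).symm
  have hW'b : W' = W ⊔ span ℝ {b} := hKb ▸ hW'K
  -- an isotropic `b` would be orthogonal to all of `W ⊔ span {b} = W'`
  have hbb : B b b ≠ 0 := by
    intro hbb
    have hbW' : b ∈ B.orthogonal W' := by
      rw [BilinForm.mem_orthogonal_iff]
      intro y hy
      rw [hW'b] at hy
      obtain ⟨y₁, hy₁, y₂, hy₂, rfl⟩ := mem_sup.1 hy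
      obtain ⟨c, rfl⟩ := mem_span_singleton.1 hy₂
      simp [(BilinForm.mem_orthogonal_iff.1 (mem_inf.1 hbK).1) y₁ hy₁, hbb]
    exact hb0 (Submodule.disjoint_def.1
      (BilinForm.isCompl_orthogonal_of_restrict_nondegenerate hB hW').disjoint b (mem_inf.1 hbK).2
      hbW')
  obtain ⟨c, hc0, hcb⟩ := exists_smul_apply_self_eq_one_or hbb
  refine ⟨c • b, (B.orthogonal W).smul_mem c (mem_inf.1 hbK).1, hcb, ?_⟩
  rwa [span_singleton_smul_eq (IsUnit.mk0 c hc0)]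

end Flag

section Adapted

variable {V : Type*} [AddCommGroup V] [Module ℝ V] {B : BilinForm ℝ V}

structure IsAdaptedOrthonormal (B : BilinForm ℝ V) (ξ : ℕ → Submodule ℝ V) {d : ℕ}
    (v : Fin d → V) : Prop where
  iIsOrtho : B.iIsOrtho v
  apply_self : ∀ i, B (v i) (v i) = 1 ∨ B (v i) (v i) = -1
  span_eq : ∀ j ≤ d, ξ j = span ℝ (v '' {i | (i : ℕ) < j})

lemma exists_isAdaptedOrthonormal [FiniteDimensional ℝ V] (hB : B.IsRefl) {d : ℕ}
    {ξ : ℕ → Submodule ℝ V} (hξ : IsCompleteFlag d ξ)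
    (hnd : ∀ j, 1 ≤ j → j ≤ d → (B.restrict (ξ j)).Nondegenerate) :
    ∃ v : Fin d → V, IsAdaptedOrthonormal B ξ v := by
  have hnd₀ : ∀ j ≤ d, (B.restrict (ξ j)).Nondegenerate := by
    intro j hj
    rcases j.eq_zero_or_pos with rfl | hj₀
    · have h₀ : ∀ m : ξ 0, m = 0 := fun m => Subtype.ext ((mem_bot ℝ).1 (hξ.zero_eq_bot ▸ m.2))
      exact ⟨fun m _ => h₀ m, fun m _ => h₀ m⟩
    · exact hnd j hj₀ hj
  choose w hwO hw hwspan using fun i : Fin d =>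
    exists_orthogonal_step hB (hξ.2 i i.2) (by rw [hξ.1 _ i.2, hξ.1 _ i.2.le])
      (hnd₀ i i.2.le) (hnd₀ (i + 1) i.2)
  have hlt : ∀ i j : Fin d, i < j → B (w i) (w j) = 0 := fun i j hij =>
    BilinForm.mem_orthogonal_iff.1 (hwO j) (w i) (hξ.mono hij j.2.le
      (hwspan i ▸ mem_sup_right (mem_span_singleton_self _)))
  refine ⟨w, ⟨fun i j hij => ?_, hw, fun j hj => ?_⟩⟩
  · rcases hij.lt_or_gt with h | h
    · exact hlt i j h
    · exact hB _ _ (hlt j i h)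
  · induction j with
    | zero => simp [hξ.zero_eq_bot]
    | succ k ih =>
      have hinsert : {i : Fin d | (i : ℕ) < k + 1} =
          insert (⟨k, hj⟩ : Fin d) {i : Fin d | (i : ℕ) < k} := by
        ext i
        simp only [Set.mem_ofPred_eq, Set.mem_insert_iff, Fin.ext_iff]
        omega
      rw [hinsert, Set.image_insert_eq, span_insert, sup_comm, ← ih (by omega)]
      exact hwspan ⟨k, hj⟩

namespace IsAdaptedOrthonormal

variable {d : ℕ} {ξ ξ' : ℕ → Submodule ℝ V} {v v' : Fin d → V}

lemma apply_self_ne_zero (hv : IsAdaptedOrthonormal B ξ v) (i : Fin d) : B (v i) (v i) ≠ 0 := by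
  rcases hv.apply_self i with h | h <;> simp [h]

lemma posIndex_eq [FiniteDimensional ℝ V] (hv : IsAdaptedOrthonormal B ξ v) {j : ℕ}
    (hj : j ≤ d) :
    posIndex B (ξ j) = #{i ∈ {i : Fin d | (i : ℕ) < j} | 0 < B (v i) (v i)} := by
  rw [← posIndex_span_image hv.iIsOrtho hv.apply_self_ne_zero, hv.span_eq j hj, coe_filter]
  simp

lemma apply_self_eq_of_posIndex_eq [FiniteDimensional ℝ V] (hv : IsAdaptedOrthonormal B ξ v)
    (hv' : IsAdaptedOrthonormal B ξ' v')
    (hpos : ∀ j ≤ d, posIndex B (ξ j) = posIndex B (ξ' j)) (i : Fin d) :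
    B (v i) (v i) = B (v' i) (v' i) := by
  have hsign := Fin.iff_of_card_filter_val_lt_eq (p := fun i => 0 < B (v i) (v i))
    (q := fun i => 0 < B (v' i) (v' i))
    (fun j hj => by rw [← hv.posIndex_eq hj, ← hv'.posIndex_eq hj, hpos j hj]) i
  rcases hv.apply_self i with h | h <;> rcases hv'.apply_self i with h' | h' <;>
    simp only [h, h'] at hsign ⊢ <;> norm_num at hsign

lemma exists_isometry_map_eq [FiniteDimensional ℝ V] (hd : finrank ℝ V = d)
    (hv : IsAdaptedOrthonormal B ξ v) (hv' : IsAdaptedOrthonormal B ξ' v')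
    (hself : ∀ i, B (v i) (v i) = B (v' i) (v' i)) :
    ∃ e : V ≃ₗ[ℝ] V, (∀ u w, B (e u) (e w) = B u w) ∧
      ∀ j ≤ d, (ξ j).map e.toLinearMap = ξ' j := by
  have hcard : Fintype.card (Fin d) = finrank ℝ V := by simp [hd]
  let b := basisOfLinearIndependentOfCardEqFinrank' v
    (BilinForm.linearIndependent_of_iIsOrtho hv.iIsOrtho hv.apply_self_ne_zero) hcard
  let b' := basisOfLinearIndependentOfCardEqFinrank' v'
    (BilinForm.linearIndependent_of_iIsOrtho hv'.iIsOrtho hv'.apply_self_ne_zero) hcard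
  have hgram : ∀ i j, B (b i) (b j) = B (b' i) (b' j) := by
    intro i j
    rcases eq_or_ne i j with rfl | hij
    · simpa [b, b'] using hself i
    · simp [b, b', BilinForm.iIsOrtho_def.1 hv.iIsOrtho i j hij,
        BilinForm.iIsOrtho_def.1 hv'.iIsOrtho i j hij]
  refine ⟨b.equiv b' (Equiv.refl _), b.isometry_equiv_of_gram_eq b' hgram, fun j hj => ?_⟩
  rw [hv.span_eq j hj, hv'.span_eq j hj, map_span, ← Set.image_comp]
  congr 2
  funext i
  simpa [b, b'] using b.equiv_apply i b' (Equiv.refl _)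

end IsAdaptedOrthonormal

end Adapted

theorem stmt_9_general (d : ℕ)
    (B : LinearMap.BilinForm ℝ (Fin d → ℝ)) (hsymm : LinearMap.BilinForm.IsSymm B)
    (ξ ξ' : ℕ → Submodule ℝ (Fin d → ℝ))
    (hflag : IsCompleteFlag d ξ) (hflag' : IsCompleteFlag d ξ')
    (hndj : ∀ j, 1 ≤ j → j ≤ d → (LinearMap.BilinForm.restrict B (ξ j)).Nondegenerate)
    (hndj' : ∀ j, 1 ≤ j → j ≤ d → (LinearMap.BilinForm.restrict B (ξ' j)).Nondegenerate) :
    (∃ h : (Fin d → ℝ) ≃ₗ[ℝ] (Fin d → ℝ),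
        (∀ u v, B (h u) (h v) = B u v) ∧
        ∀ j, 1 ≤ j → j ≤ d → Submodule.map h.toLinearMap (ξ j) = ξ' j) ↔
      ∀ j, 1 ≤ j → j ≤ d →
        posIndex B (ξ j) = posIndex B (ξ' j) ∧ negIndex B (ξ j) = negIndex B (ξ' j) := by
  constructor
  · rintro ⟨h, hiso, hmap⟩ j hj₁ hjd
    rw [← hmap j hj₁ hjd, negIndex_eq_posIndex_neg, negIndex_eq_posIndex_neg,
      posIndex_map_of_isometry h hiso,
      posIndex_map_of_isometry (B := -B) h fun u w => by simp [hiso]]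
    exact ⟨rfl, rfl⟩
  · intro hsig
    obtain ⟨v, hv⟩ := exists_isAdaptedOrthonormal hsymm.isRefl hflag hndj
    obtain ⟨v', hv'⟩ := exists_isAdaptedOrthonormal hsymm.isRefl hflag' hndj'
    have hpos : ∀ j ≤ d, posIndex B (ξ j) = posIndex B (ξ' j) := by
      intro j hjd
      rcases j.eq_zero_or_pos with rfl | hj₁
      · rw [hflag.zero_eq_bot, hflag'.zero_eq_bot]
      · exact (hsig j hj₁ hjd).1
    obtain ⟨h, hiso, hmap⟩ := hv.exists_isometry_map_eq (finrank_fin_fun ℝ) hv'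
      (hv.apply_self_eq_of_posIndex_eq hv' hpos)
    exact ⟨h, hiso, fun j _ hjd => hmap j hjd⟩

/-- two `o`-generic complete flags are in the same orbit of the isometry group of
`o` iff the signatures of `o` restricted to the corresponding pieces agree. -/
theorem stmt_9 (d p q : ℕ) (hp : 0 < p) (hq : 0 < q) (hpq : p + q = d)
    (B : LinearMap.BilinForm ℝ (Fin d → ℝ)) (hsymm : LinearMap.BilinForm.IsSymm B)
    (hnd : LinearMap.BilinForm.Nondegenerate B)
    (hsigp : posIndex B ⊤ = p) (hsigq : negIndex B ⊤ = q)
    (ξ ξ' : ℕ → Submodule ℝ (Fin d → ℝ))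
    (hflag : IsCompleteFlag d ξ) (hflag' : IsCompleteFlag d ξ')
    (hndj : ∀ j, 1 ≤ j → j ≤ d → (LinearMap.BilinForm.restrict B (ξ j)).Nondegenerate)
    (hndj' : ∀ j, 1 ≤ j → j ≤ d → (LinearMap.BilinForm.restrict B (ξ' j)).Nondegenerate) :
    (∃ h : (Fin d → ℝ) ≃ₗ[ℝ] (Fin d → ℝ),
        (∀ u v, B (h u) (h v) = B u v) ∧
        ∀ j, 1 ≤ j → j ≤ d → Submodule.map h.toLinearMap (ξ j) = ξ' j) ↔
      ∀ j, 1 ≤ j → j ≤ d →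
        posIndex B (ξ j) = posIndex B (ξ' j) ∧ negIndex B (ξ j) = negIndex B (ξ' j) :=
  stmt_9_general d B hsymm ξ ξ' hflag hflag' hndj hndj'
end

section
/- Let (V, o) be as above and g an invertible linear map with o-adjoint g*. For non-isotropic lines ℓ, ℓ' with ⟨v, v'⟩_o ≠ 0 (v ∈ ℓ, v' ∈ ℓ' nonzero), define G(ℓ, ℓ') := (1/2) log |⟨v,v'⟩_o² / (⟨v,v⟩_o ⟨v',v'⟩_o)|. Suppose ℓ, ℓ', σ(g)·ℓ, g·ℓ' are all non-isotropic, where σ(g) = (g*)^{-1}. Then G(σ(g)·ℓ, g·ℓ') − G(ℓ, ℓ') = −(1/2) log |⟨σ(g)v, σ(g)v⟩_o / ⟨v,v⟩_o| − (1/2) log |⟨g v', g v'⟩_o / ⟨v',v'⟩_o|. -/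
/-!
Since `σ(g)` is inverse to the adjoint of `g`, the pairing `⟨σ(g) v, g v'⟩` equals `⟨v, v'⟩`.
The two quotients inside the logarithms therefore share their numerator, and the difference of
the logarithms only sees the change of the two norms `⟨v, v⟩` and `⟨v', v'⟩`.
-/

theorem LinearMap.BilinForm.IsSymm.apply_symm_apply_of_isAdjointPair {R M : Type*}
    [CommSemiring R] [AddCommMonoid M] [Module R M] {B : LinearMap.BilinForm R M}
    (hB : B.IsSymm) {g gs : M ≃ₗ[R] M} (hadj : LinearMap.IsAdjointPair B B g gs) (u w : M) :
    B (gs.symm u) (g w) = B u w := by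
  rw [hB.eq, hadj, gs.apply_symm_apply, hB.eq]

theorem Real.log_abs_div_mul_sub_log_abs_div_mul {x a b c d : ℝ} (hx : x ≠ 0) (ha : a ≠ 0)
    (hb : b ≠ 0) (hc : c ≠ 0) (hd : d ≠ 0) :
    Real.log |x / (a * b)| - Real.log |x / (c * d)| =
      -Real.log |a / c| - Real.log |b / d| := by
  have hratio : x / (a * b) = x / (c * d) * ((a / c)⁻¹ * (b / d)⁻¹) := by
    field_simp
  rw [hratio, abs_mul, abs_mul, abs_inv, abs_inv, Real.log_mul, Real.log_mul, Real.log_inv,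
    Real.log_inv]
  · ring
  all_goals positivity

theorem stmt_15_general (V : Type*) [AddCommGroup V] [Module ℝ V]
    (B : LinearMap.BilinForm ℝ V) (hsymm : LinearMap.BilinForm.IsSymm B)
    (g gs : V ≃ₗ[ℝ] V) (hadj : ∀ u v : V, B (g u) v = B u (gs v))
    (v v' : V)
    (h1 : B v v ≠ 0) (h2 : B v' v' ≠ 0)
    (h3 : B (gs.symm v) (gs.symm v) ≠ 0) (h4 : B (g v') (g v') ≠ 0)
    (h5 : B v v' ≠ 0) :
    (1 / 2) * Real.log
        |B (gs.symm v) (g v') ^ 2 / (B (gs.symm v) (gs.symm v) * B (g v') (g v'))| -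
      (1 / 2) * Real.log |B v v' ^ 2 / (B v v * B v' v')| =
    -((1 / 2) * Real.log |B (gs.symm v) (gs.symm v) / B v v|) -
      (1 / 2) * Real.log |B (g v') (g v') / B v' v'| := by
  rw [hsymm.apply_symm_apply_of_isAdjointPair hadj]
  linear_combination (1 / 2 : ℝ) *
    Real.log_abs_div_mul_sub_log_abs_div_mul (pow_ne_zero 2 h5) h3 h4 h1 h2

/-- with `σ(g) = (g*)⁻¹` and
`G(ℓ,ℓ') = (1/2) log |⟨v,v'⟩² / (⟨v,v⟩⟨v',v'⟩)|` computed on representative vectors, one has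
`G(σ(g)·ℓ, g·ℓ') − G(ℓ,ℓ') = −(1/2) log |⟨σ(g)v,σ(g)v⟩/⟨v,v⟩| − (1/2) log |⟨gv',gv'⟩/⟨v',v'⟩|`. -/
theorem stmt_15 (V : Type*) [AddCommGroup V] [Module ℝ V] [FiniteDimensional ℝ V]
    (B : LinearMap.BilinForm ℝ V) (hsymm : LinearMap.BilinForm.IsSymm B)
    (hnd : LinearMap.BilinForm.Nondegenerate B)
    (g gs : V ≃ₗ[ℝ] V) (hadj : ∀ u v : V, B (g u) v = B u (gs v))
    (ℓ ℓ' : Submodule ℝ V)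
    (hℓ : Module.finrank ℝ ℓ = 1) (hℓ' : Module.finrank ℝ ℓ' = 1)
    (v v' : V) (hv : v ∈ ℓ) (hv' : v' ∈ ℓ') (hv0 : v ≠ 0) (hv'0 : v' ≠ 0)
    (h1 : B v v ≠ 0) (h2 : B v' v' ≠ 0)
    (h3 : B (gs.symm v) (gs.symm v) ≠ 0) (h4 : B (g v') (g v') ≠ 0)
    (h5 : B v v' ≠ 0) :
    (1 / 2) * Real.log
        |B (gs.symm v) (g v') ^ 2 / (B (gs.symm v) (gs.symm v) * B (g v') (g v'))| -
      (1 / 2) * Real.log |B v v' ^ 2 / (B v v * B v' v')| =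
    -((1 / 2) * Real.log |B (gs.symm v) (gs.symm v) / B v v|) -
      (1 / 2) * Real.log |B (g v') (g v') / B v' v'| :=
  stmt_15_general V B hsymm g gs hadj v v' h1 h2 h3 h4 h5
end
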